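/- arXiv:1204.0876 — 2 statements merged into one kernel-verified Lean document; each statement's English description precedes it below -/
import Mathlib

section
/- Let G be a group and let k, l ≥ 1. For every σ ∈ A_G(k) and every x ∈ Γ_G(l), the element x⁻¹·x^σ lies in Γ_G(k+l). -/
/-!
STATEMENT 0: Let G be a group and let k, l ≥ 1. For every σ ∈ A_G(k) and every
x ∈ Γ_G(l), the element x⁻¹·x^σ lies in Γ_G(k+l).

Here `Γ_G(m) = lowerCentralSeries G (m-1)` (so `lowerCentralSeries G 0 = Γ_G(1) = G`),
and `A_G(k)` (`johnsonFiltration G k`) is the kernel of `Aut G → Aut (G/Γ_G(k+1))`,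
i.e. the automorphisms `σ` with `x⁻¹ * σ x ∈ Γ_G(k+1) = lowerCentralSeries G k` for all `x`.
-/

noncomputable section

/-- For a subgroup `N` of `G`, the subgroup of automorphisms `σ` with `x⁻¹ · x^σ ∈ N`
for all `x`. -/
def fixFiltration {G : Type*} [Group G] (N : Subgroup G) : Subgroup (MulAut G) where
  carrier := {σ | ∀ x : G, x⁻¹ * σ x ∈ N}
  one_mem' := by intro x; simpa using N.one_mem
  mul_mem' := by
    intro σ τ hσ hτ x
    have h3 : σ (x⁻¹ * τ x) ∈ N := by
      have h4 : σ (x⁻¹ * τ x) =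
          (x⁻¹ * τ x) * ((x⁻¹ * τ x)⁻¹ * σ (x⁻¹ * τ x)) := by group
      rw [h4]
      exact N.mul_mem (hτ x) (hσ _)
    have h5 : x⁻¹ * (σ * τ) x = (x⁻¹ * σ x) * σ (x⁻¹ * τ x) := by
      rw [MulAut.mul_apply, map_mul, map_inv]; group
    rw [h5]
    exact N.mul_mem (hσ x) h3
  inv_mem' := by
    intro σ hσ x
    have h := hσ (σ⁻¹ x)
    rw [MulAut.apply_inv_self] at h
    simpa [mul_inv_rev] using N.inv_mem h

/-- The Andreadakis–Johnson filtration: `johnsonFiltration G k = 𝒜_G(k)`, the kernel of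
`Aut G → Aut (G/Γ_G(k+1))`, where `Γ_G(k+1) = lowerCentralSeries G k`. -/
def johnsonFiltration (G : Type*) [Group G] (k : ℕ) : Subgroup (MulAut G) :=
  fixFiltration ((⊤ : Subgroup G).lowerCentralSeries k)

theorem mem_johnsonFiltration {G : Type*} [Group G] {k : ℕ} {σ : MulAut G} :
    σ ∈ johnsonFiltration G k ↔ ∀ x : G, x⁻¹ * σ x ∈ (⊤ : Subgroup G).lowerCentralSeries k :=
  Iff.rfl

/-! Induction on `l`. The subgroup `Γ_G(l+1)` is generated by commutators `⁅a, g⁆` with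
`a ∈ Γ_G(l)`, and the elements `x` with `x⁻¹ · x^σ ∈ Γ_G(k+l+1)` form a subgroup, so it
suffices to treat such a commutator. Writing `a^σ = a α` and `g^σ = g β`, induction gives
`α ∈ Γ_G(k+l)`, which is central modulo `Γ_G(k+l+1)`, and `β ∈ Γ_G(k+1)`, so that
`⁅a, β⁆ ∈ ⁅Γ_G(l), Γ_G(k+1)⁆ ≤ Γ_G(k+l+1)` by the three subgroup lemma. Hence
`⁅a, g⁆^σ = ⁅a α, g β⁆ ≡ ⁅a, g⁆` modulo `Γ_G(k+l+1)`. -/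

open scoped commutatorElement

namespace Subgroup

variable {G : Type*} [Group G]

theorem commutator_commutator_le_of_rotate {H₁ H₂ H₃ N : Subgroup G}
    [N.Normal] (h₁ : ⁅⁅H₂, H₃⁆, H₁⁆ ≤ N) (h₂ : ⁅⁅H₃, H₁⁆, H₂⁆ ≤ N) : ⁅⁅H₁, H₂⁆, H₃⁆ ≤ N := by
  rw [← QuotientGroup.ker_mk' N, ← map_eq_bot_iff] at h₁ h₂ ⊢
  simp only [map_commutator] at h₁ h₂ ⊢
  exact commutator_commutator_eq_bot_of_rotate h₁ h₂

theorem commutator_lowerCentralSeries_le (i j : ℕ) :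
    ⁅(⊤ : Subgroup G).lowerCentralSeries i, (⊤ : Subgroup G).lowerCentralSeries j⁆ ≤
      (⊤ : Subgroup G).lowerCentralSeries (i + j + 1) := by
  induction j generalizing i with
  | zero => exact le_rfl
  | succ j ih =>
    rw [lowerCentralSeries_succ, commutator_comm]
    refine commutator_commutator_le_of_rotate ?_ ?_
    · rw [commutator_comm ⊤, ← lowerCentralSeries_succ]
      exact (ih (i + 1)).trans_eq (by rw [add_right_comm i 1 j]; rfl)
    · exact commutator_mono (ih i) le_rfl

end Subgroup

section

open Subgroup

variable {G : Type*} [Group G]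

theorem inv_commutatorElement_mul_commutatorElement_mul_mul_mem {N : Subgroup G} [N.Normal]
    {a g α β : G} (hα : ⁅α, g * β⁆ ∈ N) (hβ : ⁅a, β⁆ ∈ N) :
    ⁅a, g⁆⁻¹ * ⁅a * α, g * β⁆ ∈ N := by
  rw [commutatorElement_mul_left_eq_conj_mul, commutatorElement_mul_right_eq_mul_conj]
  have h := N.mul_mem (Normal.conj_mem ‹_› _ (Normal.conj_mem ‹_› _ hα a) ⁅a, g⁆⁻¹)
    (Normal.conj_mem ‹_› _ hβ g)
  convert h using 1
  group

theorem inv_mul_apply_mem_lowerCentralSeries_add {k : ℕ} {σ : MulAut G}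
    (hσ : σ ∈ johnsonFiltration G k) (m : ℕ) {x : G}
    (hx : x ∈ (⊤ : Subgroup G).lowerCentralSeries m) :
    x⁻¹ * σ x ∈ (⊤ : Subgroup G).lowerCentralSeries (k + m) := by
  induction m generalizing x with
  | zero => exact hσ x
  | succ m ih =>
    let π := QuotientGroup.mk' ((⊤ : Subgroup G).lowerCentralSeries (k + m + 1))
    suffices h : (⊤ : Subgroup G).lowerCentralSeries (m + 1) ≤
        π.eqLocus (π.comp σ.toMonoidHom) from QuotientGroup.eq.mp (h hx)
    refine commutator_le.mpr fun a ha g _ => QuotientGroup.eq.mpr ?_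
    have hσa : σ a = a * (a⁻¹ * σ a) := by group
    have hσg : σ g = g * (g⁻¹ * σ g) := by group
    show ⁅a, g⁆⁻¹ * σ ⁅a, g⁆ ∈ _
    rw [map_commutatorElement, hσa, hσg]
    refine inv_commutatorElement_mul_commutatorElement_mul_mul_mem ?_ ?_
    · exact commutator_mem_commutator (ih ha) (mem_top _)
    · exact (commutator_lowerCentralSeries_le m k).trans_eq (by rw [add_comm m k])
        (commutator_mem_commutator ha (hσ g))

end

theorem statement0_general (G : Type*) [Group G] (k l : ℕ)
    (σ : MulAut G) (hσ : σ ∈ johnsonFiltration G k)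
    (x : G) (hx : x ∈ (⊤ : Subgroup G).lowerCentralSeries (l - 1)) :
    x⁻¹ * σ x ∈ (⊤ : Subgroup G).lowerCentralSeries (k + l - 1) :=
  -- `k + l - 1 ≤ k + (l - 1)`, strictly at `l = 0` because of truncated subtraction
  Subgroup.lowerCentralSeries_antitone ⊤ (by omega)
    (inv_mul_apply_mem_lowerCentralSeries_add hσ _ hx)

theorem statement0 (G : Type*) [Group G] (k l : ℕ) (hk : 1 ≤ k) (hl : 1 ≤ l)
    (σ : MulAut G) (hσ : σ ∈ johnsonFiltration G k)
    (x : G) (hx : x ∈ (⊤ : Subgroup G).lowerCentralSeries (l - 1)) :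
    x⁻¹ * σ x ∈ (⊤ : Subgroup G).lowerCentralSeries (k + l - 1) :=
  statement0_general G k l σ hσ x hx
end
end

section
/- For any n ≥ 2, the first homology group H_1(K_n, Z) = K_n^ab of the kernel K_n of the natural homomorphism ν : IA_n → IA_n^M has infinite rank; that is, K_n^ab ⊗_Z Q is an infinite-dimensional Q-vector space. In particular K_n (which equals the kernel of the Magnus representation r^𝔞 of IA_n) is not finitely generated. -/
/-!
STATEMENT 17: For any n ≥ 2, the first homology group H_1(K_n, Z) = K_n^ab of the kernel
K_n of the natural homomorphism ν : IA_n → IA_n^M has infinite rank; that is,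
K_n^ab ⊗_Z Q is an infinite-dimensional Q-vector space.  In particular K_n (which equals
the kernel of the Magnus representation r^𝔞 of IA_n) is not finitely generated.

Encoding: `F = FreeGroup (Fin n)`, `F^M = F ⧸ derivedSeries F 2`,
`IA_n = johnsonFiltration F 1`, ν is the restriction to IA_n of
`mulAutQuotientMap (derivedSeries F 2) : MulAut F →* MulAut F^M`, so
`K_n = IA_n ⊓ ker (mulAutQuotientMap _)`.  "Infinite rank" is expressed as
`¬ Module.Finite ℚ (ℚ ⊗[ℤ] Additive (Abelianization K_n))`.
-/

noncomputable section

open scoped TensorProduct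
noncomputable section

instance lowerCentralSeries_characteristic (G : Type*) [Group G] (n : ℕ) :
    ((⊤ : Subgroup G).lowerCentralSeries n).Characteristic := by
  induction n with
  | zero => rw [Subgroup.lowerCentralSeries_zero]; infer_instance
  | succ n ih => rw [Subgroup.lowerCentralSeries_succ]; exact Subgroup.commutator_characteristic _ _

instance derivedSeries_characteristic' (G : Type*) [Group G] (n : ℕ) :
    (derivedSeries G n).Characteristic := by
  induction n with
  | zero => rw [derivedSeries_zero]; infer_instance
  | succ n ih => rw [derivedSeries_succ]; exact Subgroup.commutator_characteristic _ _

/-- The natural homomorphism `Aut G → Aut (G/N)` for a characteristic subgroup `N`. -/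
def mulAutQuotientMap {G : Type*} [Group G] (N : Subgroup G) [N.Normal] [N.Characteristic] :
    MulAut G →* MulAut (G ⧸ N) where
  toFun σ := QuotientGroup.congr N N σ (Subgroup.characteristic_iff_map_eq.mp inferInstance σ)
  map_one' := by
    ext x
    induction x using QuotientGroup.induction_on with
    | H x => rfl
  map_mul' σ τ := by
    ext x
    induction x using QuotientGroup.induction_on with
    | H x => rfl

/-- The free metabelian group of rank `n`. -/
abbrev FreeMetabelianGroup (n : ℕ) :=
  FreeGroup (Fin n) ⧸ derivedSeries (FreeGroup (Fin n)) 2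

/-- The natural homomorphism `Aut F_n → Aut F_n^M`. -/
def nuAut (n : ℕ) : MulAut (FreeGroup (Fin n)) →* MulAut (FreeMetabelianGroup n) :=
  mulAutQuotientMap (derivedSeries (FreeGroup (Fin n)) 2)

/-- `K_n`, the kernel of `ν : IA_n → IA_n^M`. -/
def magnusKernel (n : ℕ) : Subgroup (MulAut (FreeGroup (Fin n))) :=
  johnsonFiltration (FreeGroup (Fin n)) 1 ⊓ (nuAut n).ker

/-!
For `σ ∈ K_n` every displacement `x⁻¹ σ(x)` lies in `F''`, and `σ ↦ μ (x⁻¹ σ(x))` is a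
homomorphism `K_n → ℤ` for every homomorphism `μ : F'' → ℤ` that is invariant under `K_n`.
Such `μ` come from pairs `a, b : F' → ℤ` of lamplighter (Fox derivative) coefficients: these kill
`F''`, so `K_n` does not change them; since `F'` is free, `(a, b) : F' → ℤ²` lifts to the
Heisenberg group, and its central coordinate is a homomorphism `F'' → ℤ` sending `⁅u, v⁆` to
`a u * b v - a v * b u`.  With `x = x₁`, `y = x₂`, `u_j = x⁻ʲ ⁅x, y⁆ xʲ`, these characters take a
unitriangular matrix of values on the inner automorphisms by `⁅u_0, u_(j+1)⁆ ∈ F''`, which all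
lie in `K_n`; hence `K_n^ab ⊗ ℚ` is infinite-dimensional.
-/

open scoped commutatorElement

section RationalAbelianization

theorem linearIndependent_of_triangular {R V : Type*} [CommRing R] [NoZeroDivisors R]
    [AddCommGroup V] [Module R V] (v : ℕ → V) (φ : ℕ → V →ₗ[R] R)
    (hdiag : ∀ j, φ j (v j) ≠ 0) (htri : ∀ k j, k < j → φ k (v j) = 0) :
    LinearIndependent R v := by
  rw [linearIndependent_iff']
  intro s c hsum i
  induction i using Nat.strong_induction_on with
  | _ i ih =>
    intro hi
    have hφ := congrArg (φ i) hsum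
    rw [map_sum, map_zero, Finset.sum_eq_single_of_mem i hi fun b hb hbi => ?_] at hφ
    · simpa [hdiag i] using hφ
    · rcases lt_or_gt_of_ne hbi with hlt | hgt
      · simp [ih b hlt hb]
      · simp [htri i b hgt]

variable {G : Type*} [Group G]

def rationalCharacter (f : G →* Multiplicative ℤ) :
    ℚ ⊗[ℤ] Additive (Abelianization G) →ₗ[ℚ] ℚ :=
  LinearMap.liftBaseChange ℚ
    ((Int.castAddHom ℚ).comp (MonoidHom.toAdditiveLeft (Abelianization.lift f))).toIntLinearMap

theorem rationalCharacter_tmul (f : G →* Multiplicative ℤ) (g : G) :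
    rationalCharacter f (1 ⊗ₜ .ofMul (Abelianization.of g)) = (f g).toAdd := by
  simp [rationalCharacter]

theorem not_finite_rationalAbelianization_of_triangular (g : ℕ → G)
    (f : ℕ → G →* Multiplicative ℤ) (hdiag : ∀ j, f j (g j) ≠ 1)
    (htri : ∀ k j, k < j → f k (g j) = 1) :
    ¬ Module.Finite ℚ (ℚ ⊗[ℤ] Additive (Abelianization G)) := fun _ =>
  Module.Finite.not_linearIndependent_of_infinite _ <|
    linearIndependent_of_triangular (fun j => 1 ⊗ₜ .ofMul (Abelianization.of (g j)))
      (fun k => rationalCharacter (f k))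
      (fun j => by simpa [rationalCharacter_tmul] using hdiag j)
      (fun k j hkj => by simp [rationalCharacter_tmul, htri k j hkj])

theorem Group.FG.finite_rationalAbelianization [Group.FG G] :
    Module.Finite ℚ (ℚ ⊗[ℤ] Additive (Abelianization G)) := by
  have : Group.FG (Abelianization G) :=
    Group.fg_of_surjective (f := Abelianization.of) QuotientGroup.mk_surjective
  have : Module.Finite ℤ (Additive (Abelianization G)) :=
    Module.Finite.iff_addGroup_fg.mpr (GroupFG.iff_add_fg.mp this)
  infer_instance

end RationalAbelianization

section Displacement

variable {G A : Type*} [Group G] [Group A] {N : Subgroup G}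

theorem apply_mem_of_mem_fixFiltration {σ : MulAut G} (hσ : σ ∈ fixFiltration N) {d : G}
    (hd : d ∈ N) : σ d ∈ N :=
  mul_inv_cancel_left d (σ d) ▸ N.mul_mem hd (hσ d)

theorem conj_mem_fixFiltration [hN : N.Normal] {d : G} (hd : d ∈ N) :
    MulAut.conj d ∈ fixFiltration N := fun x => by
  simpa [mul_assoc] using N.mul_mem (hN.conj_mem _ hd x⁻¹) (N.inv_mem hd)

/-- `σ ↦ x⁻¹ * σ x` is a crossed homomorphism with values in `N`, so composing it with a
`fixFiltration N`-invariant `μ` gives a homomorphism. -/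
def displacementHom (x : G) (μ : N →* A)
    (hμ : ∀ σ (hσ : σ ∈ fixFiltration N) (d : N),
      μ ⟨σ d, apply_mem_of_mem_fixFiltration hσ d.2⟩ = μ d) :
    fixFiltration N →* A where
  toFun σ := μ ⟨x⁻¹ * σ.1 x, σ.2 x⟩
  map_one' := by
    simp only [OneMemClass.coe_one, MulAut.one_apply, inv_mul_cancel]
    exact μ.map_one
  map_mul' σ τ := by
    rw [← hμ σ σ.2 ⟨x⁻¹ * τ.1 x, τ.2 x⟩, ← map_mul]
    congr 1
    ext
    simp [mul_assoc]

theorem displacementHom_conj [N.Normal] (x : G) (μ : N →* A)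
    (hμ : ∀ σ (hσ : σ ∈ fixFiltration N) (d : N),
      μ ⟨σ d, apply_mem_of_mem_fixFiltration hσ d.2⟩ = μ d) {d : G} (hd : d ∈ N) :
    displacementHom x μ hμ ⟨MulAut.conj d, conj_mem_fixFiltration hd⟩ =
      μ ⟨x⁻¹ * d * x, by simpa using ‹N.Normal›.conj_mem d hd x⁻¹⟩ * (μ ⟨d, hd⟩)⁻¹ := by
  simp only [displacementHom, MonoidHom.coe_mk, OneHom.coe_mk]
  rw [← map_inv, ← map_mul]
  congr 1
  ext
  simp [mul_assoc]

theorem ker_mulAutQuotientMap (N : Subgroup G) [N.Normal] [N.Characteristic] :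
    (mulAutQuotientMap N).ker = fixFiltration N := by
  ext σ
  have hfix (x : G) : mulAutQuotientMap N σ x = x ↔ x⁻¹ * σ x ∈ N := by
    rw [← QuotientGroup.eq, eq_comm]
    rfl
  rw [MonoidHom.mem_ker, MulEquiv.ext_iff]
  exact ⟨fun h x => (hfix x).1 (h x), fun h q =>
    QuotientGroup.induction_on q fun x => (hfix x).2 (h x)⟩

end Displacement

/-- `a` acts on `(c, b)` by `(c + a * b, b)`, so that `c` becomes the central coordinate. -/
def heisenbergAction : Multiplicative ℤ →* MulAut (Multiplicative (ℤ × ℤ)) where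
  toFun a := AddEquiv.toMultiplicative
    { toFun := fun cb => (cb.1 + a.toAdd * cb.2, cb.2)
      invFun := fun cb => (cb.1 - a.toAdd * cb.2, cb.2)
      left_inv := fun cb => by simp
      right_inv := fun cb => by simp
      map_add' := fun cb cb' => by
        simp only [Prod.fst_add, Prod.snd_add, Prod.mk_add_mk]
        ring_nf }
  map_one' := by ext <;> simp [AddEquiv.toMultiplicative, AddMonoidHom.toMultiplicative]
  map_mul' a b := by
    ext <;> simp [AddEquiv.toMultiplicative, AddMonoidHom.toMultiplicative, add_mul, add_comm,
      add_left_comm]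

theorem heisenbergAction_apply (a : Multiplicative ℤ) (cb : Multiplicative (ℤ × ℤ)) :
    (heisenbergAction a cb).toAdd = (cb.toAdd.1 + a.toAdd * cb.toAdd.2, cb.toAdd.2) :=
  rfl

abbrev Heisenberg := Multiplicative (ℤ × ℤ) ⋊[heisenbergAction] Multiplicative ℤ

namespace Heisenberg

def snd : Heisenberg →* Multiplicative ℤ where
  toFun e := .ofAdd e.left.toAdd.2
  map_one' := rfl
  map_mul' _ _ := rfl

def center : (SemidirectProduct.rightHom : Heisenberg →* Multiplicative ℤ).ker →*
    Multiplicative ℤ where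
  toFun e := .ofAdd e.1.left.toAdd.1
  map_one' := rfl
  map_mul' e e' := by
    have he : e.1.right = 1 := e.2
    simp only [Subgroup.coe_mul, SemidirectProduct.mul_left, he, map_one, MulAut.one_apply]
    rfl

theorem commutator_left_fst (e e' : Heisenberg) :
    ⁅e, e'⁆.left.toAdd.1 =
      e.right.toAdd * e'.left.toAdd.2 - e'.right.toAdd * e.left.toAdd.2 := by
  simp only [commutatorElement_def, SemidirectProduct.mul_left, SemidirectProduct.mul_right,
    SemidirectProduct.inv_left, SemidirectProduct.inv_right, toAdd_mul, toAdd_inv,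
    heisenbergAction_apply, Prod.fst_add, Prod.fst_neg, Prod.snd_neg]
  ring

end Heisenberg

section CommutatorPairing

variable {G : Type*} [Group G] (H : Subgroup G)

theorem Subgroup.apply_eq_one_of_mem_commutator {A : Type*} [CommGroup A] (f : H →* A) {d : G}
    (hd : d ∈ ⁅H, H⁆) : f ⟨d, H.commutator_le_self hd⟩ = 1 := by
  rw [← H.map_subtype_commutator] at hd
  obtain ⟨d', hd', rfl⟩ := hd
  exact Abelianization.commutator_subset_ker f hd'

theorem Subgroup.apply_mem_of_mem_fixFiltration_commutator {σ : MulAut G}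
    (hσ : σ ∈ fixFiltration ⁅H, H⁆) {u : G} (hu : u ∈ H) : σ u ∈ H :=
  apply_mem_of_mem_fixFiltration (fun x => H.commutator_le_self (hσ x)) hu

theorem Subgroup.apply_apply_of_mem_fixFiltration_commutator {A : Type*} [CommGroup A]
    (f : H →* A) {σ : MulAut G} (hσ : σ ∈ fixFiltration ⁅H, H⁆) {u : G} (hu : u ∈ H) :
    f ⟨σ u, H.apply_mem_of_mem_fixFiltration_commutator hσ hu⟩ = f ⟨u, hu⟩ := by
  rw [← mul_one (f ⟨u, hu⟩), ← H.apply_eq_one_of_mem_commutator f (hσ u), ← map_mul]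
  congr 1
  ext
  simp

variable [IsFreeGroup H] (a b : H →* Multiplicative ℤ)

def heisenbergLift : H →* Heisenberg :=
  IsFreeGroup.lift fun i => ⟨.ofAdd (0, (b (IsFreeGroup.of i)).toAdd), a (IsFreeGroup.of i)⟩

theorem heisenbergLift_right (h : H) : (heisenbergLift H a b h).right = a h := by
  refine DFunLike.congr_fun (IsFreeGroup.ext_hom fun i => ?_ :
    SemidirectProduct.rightHom.comp (heisenbergLift H a b) = a) h
  rw [MonoidHom.comp_apply, heisenbergLift, IsFreeGroup.lift_of]
  rfl

theorem heisenbergLift_left_snd (h : H) :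
    (heisenbergLift H a b h).left.toAdd.2 = (b h).toAdd := by
  refine congrArg Multiplicative.toAdd (DFunLike.congr_fun (IsFreeGroup.ext_hom fun i => ?_ :
    Heisenberg.snd.comp (heisenbergLift H a b) = b) h)
  rw [MonoidHom.comp_apply, heisenbergLift, IsFreeGroup.lift_of]
  rfl

/-- The homomorphism `⁅H, H⁆ → ℤ` with `⁅u, v⁆ ↦ a u * b v - a v * b u`: the central coordinate
of a lift of `(a, b) : H → ℤ²` to the Heisenberg group, which exists because `H` is free. -/
def commutatorPairing : ↥⁅H, H⁆ →* Multiplicative ℤ :=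
  Heisenberg.center.comp <|
    ((heisenbergLift H a b).comp (Subgroup.inclusion H.commutator_le_self)).codRestrict _
      fun d => (heisenbergLift_right H a b _).trans (H.apply_eq_one_of_mem_commutator a d.2)

theorem commutatorPairing_commutator (u v : H) :
    (commutatorPairing H a b ⟨⁅(u : G), v⁆, Subgroup.commutator_mem_commutator u.2 v.2⟩).toAdd =
      (a u).toAdd * (b v).toAdd - (a v).toAdd * (b u).toAdd := by
  show (heisenbergLift H a b ⁅u, v⁆).left.toAdd.1 = _
  rw [map_commutatorElement, Heisenberg.commutator_left_fst, heisenbergLift_right,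
    heisenbergLift_right, heisenbergLift_left_snd, heisenbergLift_left_snd]

theorem commutatorPairing_apply_of_mem_fixFiltration {σ : MulAut G}
    (hσ : σ ∈ fixFiltration ⁅H, H⁆) (d : ↥⁅H, H⁆) :
    commutatorPairing H a b ⟨σ d, apply_mem_of_mem_fixFiltration hσ d.2⟩ =
      commutatorPairing H a b d := by
  set μ := commutatorPairing H a b
  have hH := fun {u} (hu : u ∈ H) => H.apply_mem_of_mem_fixFiltration_commutator hσ hu
  have hfix := fun (f : H →* Multiplicative ℤ) {u} (hu : u ∈ H) =>
    H.apply_apply_of_mem_fixFiltration_commutator f hσ hu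
  obtain ⟨d, hd⟩ := d
  have hd' := hd
  rw [Subgroup.commutator_def] at hd'
  refine Subgroup.closure_induction
    (p := fun d _ => ∀ hd : d ∈ ⁅H, H⁆, μ ⟨σ d, apply_mem_of_mem_fixFiltration hσ hd⟩ = μ ⟨d, hd⟩)
    ?_ ?_ ?_ ?_ hd' hd
  · rintro _ ⟨u, hu, v, hv, rfl⟩ huv
    have hσuv : (⟨σ ⁅u, v⁆, apply_mem_of_mem_fixFiltration hσ huv⟩ : ↥⁅H, H⁆) =
        ⟨⁅σ u, σ v⁆, Subgroup.commutator_mem_commutator (hH hu) (hH hv)⟩ :=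
      Subtype.ext (map_commutatorElement σ u v)
    rw [hσuv]
    apply Multiplicative.toAdd.injective
    rw [commutatorPairing_commutator H a b ⟨σ u, hH hu⟩ ⟨σ v, hH hv⟩,
      commutatorPairing_commutator H a b ⟨u, hu⟩ ⟨v, hv⟩, hfix, hfix, hfix, hfix]
  · intro _
    simp
  · intro x y hx hy ihx ihy _
    rw [← Subgroup.commutator_def] at hx hy
    simp only [map_mul σ x y]
    show μ (⟨σ x, apply_mem_of_mem_fixFiltration hσ hx⟩ *
      ⟨σ y, apply_mem_of_mem_fixFiltration hσ hy⟩) = μ (⟨x, hx⟩ * ⟨y, hy⟩)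
    rw [map_mul, map_mul, ihx hx, ihy hy]
  · intro x hx ih _
    rw [← Subgroup.commutator_def] at hx
    simp only [map_inv σ x]
    show μ ⟨σ x, apply_mem_of_mem_fixFiltration hσ hx⟩⁻¹ = μ ⟨x, hx⟩⁻¹
    rw [map_inv, map_inv, ih hx]

end CommutatorPairing

namespace RegularWreathProduct

variable {D Q : Type*} [Group D] [Group Q]

def kerEval (q : Q) : (rightHom : D ≀ᵣ Q →* Q).ker →* D where
  toFun w := w.1.left q
  map_one' := rfl
  map_mul' w w' := by
    have hw : w.1.right = 1 := w.2
    simp [mul_left, hw]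

end RegularWreathProduct

section ShiftedCommutator

open FreeGroup

variable {ι : Type*} (i₀ i₁ : ι)

def shiftedCommutator (j : ℕ) : FreeGroup ι := (of i₀ ^ j)⁻¹ * ⁅of i₀, of i₁⁆ * of i₀ ^ j

theorem shiftedCommutator_mem (j : ℕ) :
    shiftedCommutator i₀ i₁ j ∈ derivedSeries (FreeGroup ι) 1 := by
  have hc : ⁅of i₀, of i₁⁆ ∈ derivedSeries (FreeGroup ι) 1 := by
    rw [derivedSeries_one]
    exact Subgroup.commutator_mem_commutator (Subgroup.mem_top _) (Subgroup.mem_top _)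
  simpa [shiftedCommutator] using (derivedSeries_normal _ 1).conj_mem _ hc (of i₀ ^ j)⁻¹

theorem inv_mul_shiftedCommutator_mul (j : ℕ) :
    (of i₀)⁻¹ * shiftedCommutator i₀ i₁ j * of i₀ = shiftedCommutator i₀ i₁ (j + 1) := by
  simp only [shiftedCommutator, pow_succ, mul_inv_rev]
  group

theorem inv_mul_commutator_shiftedCommutator_mul (j j' : ℕ) :
    (of i₀)⁻¹ * ⁅shiftedCommutator i₀ i₁ j, shiftedCommutator i₀ i₁ j'⁆ * of i₀ =
      ⁅shiftedCommutator i₀ i₁ (j + 1), shiftedCommutator i₀ i₁ (j' + 1)⁆ := by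
  rw [← inv_mul_shiftedCommutator_mul, ← inv_mul_shiftedCommutator_mul]
  simp only [commutatorElement_def]
  group

end ShiftedCommutator

section Lamplighter

open RegularWreathProduct FreeGroup

variable {ι : Type*} [DecidableEq ι] (i₀ i₁ : ι)

def lamplighterRep : FreeGroup ι →* Multiplicative ℤ ≀ᵣ Multiplicative ℤ :=
  FreeGroup.lift fun i =>
    if i = i₀ then inl (.ofAdd 1) else if i = i₁ then ⟨Pi.mulSingle 1 (.ofAdd 1), 1⟩ else 1

theorem lamplighterRep_mem_ker {w : FreeGroup ι} (hw : w ∈ derivedSeries (FreeGroup ι) 1) :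
    lamplighterRep i₀ i₁ w ∈ (rightHom : Multiplicative ℤ ≀ᵣ Multiplicative ℤ →* _).ker := by
  rw [derivedSeries_one] at hw
  exact Abelianization.commutator_subset_ker (rightHom.comp (lamplighterRep i₀ i₁)) hw

def lampCoeff (t : ℤ) : derivedSeries (FreeGroup ι) 1 →* Multiplicative ℤ :=
  (kerEval (Multiplicative.ofAdd t)).comp <|
    ((lamplighterRep i₀ i₁).comp (derivedSeries (FreeGroup ι) 1).subtype).codRestrict _
      fun w => lamplighterRep_mem_ker i₀ i₁ w.2

theorem lampCoeff_shiftedCommutator (h : i₁ ≠ i₀) (t : ℤ) (j : ℕ) :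
    (lampCoeff i₀ i₁ t ⟨_, shiftedCommutator_mem i₀ i₁ j⟩).toAdd =
      (if j + t = 1 then 1 else 0) - (if j + t = 0 then 1 else 0) := by
  have hx : lamplighterRep i₀ i₁ (of i₀) = inl (.ofAdd 1) := by
    rw [lamplighterRep, lift_apply_of, if_pos rfl]
  have hxj : lamplighterRep i₀ i₁ (of i₀ ^ j) = inl (.ofAdd j) := by
    rw [map_pow, hx, ← map_pow, ← ofAdd_nsmul, nsmul_one]
  have hy : lamplighterRep i₀ i₁ (of i₁) = ⟨Pi.mulSingle 1 (.ofAdd 1), 1⟩ := by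
    simp [lamplighterRep, h]
  show ((lamplighterRep i₀ i₁ (shiftedCommutator i₀ i₁ j)).left (.ofAdd t)).toAdd = _
  simp only [shiftedCommutator, commutatorElement_def, _root_.map_mul, _root_.map_inv, hxj, hx, hy,
    mul_left, inv_left, left_inl, right_inl, Pi.inv_apply, Pi.one_apply, inv_one, inv_right,
    ← ofAdd_neg, neg_neg, Pi.mulSingle_apply, one_mul, mul_right, mul_one, ← ofAdd_add,
    add_neg_cancel, ofAdd_zero, Pi.mul_apply, ite_mul, ofAdd_eq_one, mul_ite]
  split_ifs <;> simp only [toAdd_mul, toAdd_inv, toAdd_ofAdd, toAdd_one] <;> omega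

end Lamplighter

section Characters

open FreeGroup

variable {ι : Type*} [DecidableEq ι] (i₀ i₁ : ι)

local notation "F'" => derivedSeries (FreeGroup ι) 1

def lamplighterCharacter (k : ℕ) : fixFiltration ⁅F', F'⁆ →* Multiplicative ℤ :=
  displacementHom (of i₀) (commutatorPairing F' (lampCoeff i₀ i₁ (-k)) (lampCoeff i₀ i₁ 1))
    fun _ hσ d => commutatorPairing_apply_of_mem_fixFiltration _ _ _ hσ d

theorem lamplighterCharacter_conj (h : i₁ ≠ i₀) (k j : ℕ) :
    (lamplighterCharacter i₀ i₁ k ⟨MulAut.conj ⁅shiftedCommutator i₀ i₁ 0,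
      shiftedCommutator i₀ i₁ (j + 1)⁆, conj_mem_fixFiltration
        (Subgroup.commutator_mem_commutator (shiftedCommutator_mem i₀ i₁ _)
          (shiftedCommutator_mem i₀ i₁ _))⟩).toAdd =
      (if j = k then 1 else 0) - (if j + 1 = k then 1 else 0) := by
  have hb (i : ℕ) : (lampCoeff i₀ i₁ 1 ⟨_, shiftedCommutator_mem i₀ i₁ i⟩).toAdd =
      if i = 0 then 1 else 0 := by
    rw [lampCoeff_shiftedCommutator i₀ i₁ h]
    split_ifs <;> omega
  rw [lamplighterCharacter, displacementHom_conj _ _ _ (Subgroup.commutator_mem_commutator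
    (shiftedCommutator_mem i₀ i₁ _) (shiftedCommutator_mem i₀ i₁ _))]
  simp only [inv_mul_commutator_shiftedCommutator_mul, toAdd_mul, toAdd_inv]
  rw [commutatorPairing_commutator _ _ _ ⟨_, shiftedCommutator_mem i₀ i₁ _⟩
      ⟨_, shiftedCommutator_mem i₀ i₁ _⟩,
    commutatorPairing_commutator _ _ _ ⟨_, shiftedCommutator_mem i₀ i₁ _⟩
      ⟨_, shiftedCommutator_mem i₀ i₁ _⟩]
  simp only [hb, lampCoeff_shiftedCommutator i₀ i₁ h]
  push_cast
  split_ifs <;> omega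

end Characters

theorem conj_mem_magnusKernel {n : ℕ} {d : FreeGroup (Fin n)}
    (hd : d ∈ derivedSeries (FreeGroup (Fin n)) 2) : MulAut.conj d ∈ magnusKernel n := by
  refine ⟨conj_mem_fixFiltration ?_, (ker_mulAutQuotientMap _).ge (conj_mem_fixFiltration hd)⟩
  rw [Subgroup.top_lowerCentralSeries_one, ← derivedSeries_one]
  exact derivedSeries_antitone (G := FreeGroup (Fin n)) one_le_two hd

theorem statement17 (n : ℕ) (hn : 2 ≤ n) :
    ¬ Module.Finite ℚ (ℚ ⊗[ℤ] Additive (Abelianization ↥(magnusKernel n))) ∧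
    ¬ Group.FG ↥(magnusKernel n) := by
  let i₀ : Fin n := ⟨0, by omega⟩
  let i₁ : Fin n := ⟨1, by omega⟩
  have hi : i₁ ≠ i₀ := by simp [i₀, i₁, Fin.ext_iff]
  have hK : magnusKernel n ≤ fixFiltration ⁅derivedSeries (FreeGroup (Fin n)) 1,
      derivedSeries (FreeGroup (Fin n)) 1⁆ :=
    inf_le_right.trans (ker_mulAutQuotientMap _).le
  let κ (j : ℕ) : magnusKernel n :=
    ⟨_, conj_mem_magnusKernel (Subgroup.commutator_mem_commutator
      (shiftedCommutator_mem i₀ i₁ 0) (shiftedCommutator_mem i₀ i₁ (j + 1)))⟩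
  let Λ (k : ℕ) := (lamplighterCharacter i₀ i₁ k).comp (Subgroup.inclusion hK)
  have hΛκ (k j : ℕ) : (Λ k (κ j)).toAdd =
      (if j = k then 1 else 0) - (if j + 1 = k then 1 else 0) :=
    lamplighterCharacter_conj i₀ i₁ hi k j
  have hinf := not_finite_rationalAbelianization_of_triangular κ Λ
    (fun j h => by simpa [hΛκ] using congrArg Multiplicative.toAdd h)
    (fun k j hkj => Multiplicative.toAdd.injective <| by
      rw [hΛκ, if_neg hkj.ne', if_neg (by omega)]
      rfl)
  exact ⟨hinf, fun _ => hinf Group.FG.finite_rationalAbelianization⟩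
end
end
end
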